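/- There is no constant c > 0, independent of k and of the complexity of the curves, such that d_kDTW(σ,τ) ≤ c · (d_kDTW(σ,υ) + d_kDTW(υ,τ)) holds for all triples of polygonal curves σ, τ, υ in ℝ^d. -/

import Mathlib

open List

/-- A (monotone) traversal of two curves with `m'` and `m''` vertices:
a sequence of (0-based) index pairs starting at `(0,0)`, ending at `(m'-1, m''-1)`,
where each pair is followed by one that increments at least one index by one. -/
def IsTraversal (m' m'' : ℕ) (T : List (ℕ × ℕ)) : Prop :=
  T ≠ [] ∧ T.head? = some (0, 0) ∧ T.getLast? = some (m' - 1, m'' - 1) ∧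
  (∀ p ∈ T, p.1 < m' ∧ p.2 < m'') ∧
  T.Chain' (fun a b => b = (a.1 + 1, a.2) ∨ b = (a.1, a.2 + 1) ∨ b = (a.1 + 1, a.2 + 1))

/-- Sum of the `k` largest entries of a list of reals (zero-padded if the list is shorter). -/
noncomputable def topkSum (k : ℕ) (l : List ℝ) : ℝ :=
  ((l.insertionSort (· ≥ ·)).take k).sum

/-- The list of matched distances of a traversal. -/
def matchedDists {E : Type*} [PseudoMetricSpace E] (σ τ : ℕ → E) (T : List (ℕ × ℕ)) :
    List ℝ :=
  T.map fun p => dist (σ p.1) (τ p.2)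

/-- The `k`-DTW distance of curves `σ` (complexity `m'`) and `τ` (complexity `m''`). -/
noncomputable def kDTW {E : Type*} [PseudoMetricSpace E] (k : ℕ) (σ τ : ℕ → E)
    (m' m'' : ℕ) : ℝ :=
  sInf {x | ∃ T, IsTraversal m' m'' T ∧ x = topkSum k (matchedDists σ τ T)}

/-- The DTW distance. -/
noncomputable def DTW {E : Type*} [PseudoMetricSpace E] (σ τ : ℕ → E) (m' m'' : ℕ) : ℝ :=
  sInf {x | ∃ T, IsTraversal m' m'' T ∧ x = (matchedDists σ τ T).sum}

/-- The discrete Fréchet distance. -/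
noncomputable def discreteFrechet {E : Type*} [PseudoMetricSpace E] (σ τ : ℕ → E)
    (m' m'' : ℕ) : ℝ :=
  sInf {x | ∃ T, IsTraversal m' m'' T ∧ x = (matchedDists σ τ T).foldr max 0}

/-!
Take `k = n`, a unit vector `e`, the two-vertex curve `υ = (0, e)`, and the `n`-vertex constant
curves `σ ≡ 0` and `τ ≡ e`. Traversing `σ` against the first vertex of `υ` and then stepping to
`(n-1, 1)` costs only one unit, so `d(σ,υ) ≤ 1`, and symmetrically `d(υ,τ) ≤ 1`. But every
traversal of `σ` and `τ` has at least `n` pairs, each at distance `1`, so `d(σ,τ) = n`.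
Any `n > 2c` contradicts the triangle inequality with constant `c`.
-/

def IsTraversalStep (a b : ℕ × ℕ) : Prop :=
  b = (a.1 + 1, a.2) ∨ b = (a.1, a.2 + 1) ∨ b = (a.1 + 1, a.2 + 1)

lemma topkSum_nonneg {k : ℕ} {l : List ℝ} (h : ∀ x ∈ l, 0 ≤ x) : 0 ≤ topkSum k l :=
  List.sum_nonneg fun _ hx ↦
    h _ ((List.perm_insertionSort _ l).mem_iff.mp (List.mem_of_mem_take hx))

lemma topkSum_le_sum {k : ℕ} {l : List ℝ} (h : ∀ x ∈ l, 0 ≤ x) : topkSum k l ≤ l.sum := by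
  have hperm := List.perm_insertionSort (· ≥ ·) l
  have hdrop : 0 ≤ ((l.insertionSort (· ≥ ·)).drop k).sum :=
    List.sum_nonneg fun _ hx ↦ h _ (hperm.mem_iff.mp (List.mem_of_mem_drop hx))
  rw [← hperm.sum_eq, ← List.sum_take_add_sum_drop _ k]
  exact le_add_of_nonneg_right hdrop

lemma topkSum_of_forall_eq {k : ℕ} {l : List ℝ} {a : ℝ} (h : ∀ x ∈ l, x = a)
    (hk : k ≤ l.length) : topkSum k l = k * a := by
  have hperm := List.perm_insertionSort (· ≥ ·) l
  have htake : (l.insertionSort (· ≥ ·)).take k = List.replicate k a :=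
    List.eq_replicate_iff.mpr
      ⟨by rw [List.length_take, hperm.length_eq]; omega,
        fun x hx ↦ h x (hperm.mem_iff.mp (List.mem_of_mem_take hx))⟩
  rw [topkSum, htake, List.sum_replicate, nsmul_eq_mul]

namespace IsTraversal

variable {m' m'' : ℕ} {T : List (ℕ × ℕ)}

lemma fst_getElem_le (hT : IsTraversal m' m'' T) (i : ℕ) (hi : i < T.length) : T[i].1 ≤ i := by
  induction i with
  | zero =>
    obtain ⟨a, T', rfl⟩ := List.exists_cons_of_ne_nil hT.1
    have hhead := hT.2.1
    simp_all
  | succ i ih =>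
    have hstep : IsTraversalStep T[i] T[i + 1] := hT.2.2.2.2.getElem i hi
    have := ih (by omega)
    rcases hstep with h | h | h <;> rw [h] <;> dsimp only <;> omega

lemma le_length (hT : IsTraversal m' m'' T) (hm' : 1 ≤ m') : m' ≤ T.length := by
  have hlen : 0 < T.length := List.length_pos_iff.mpr hT.1
  have hlast : T[T.length - 1] = (m' - 1, m'' - 1) := by
    rw [← List.getLast_eq_getElem hT.1]
    exact Option.some_injective _ (by rw [← List.getLast?_eq_some_getLast, hT.2.2.1])
  have := hT.fst_getElem_le (T.length - 1) (by omega)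
  rw [hlast] at this
  omega

end IsTraversal

lemma isTraversal_map_range {m' m'' N : ℕ} {f : ℕ → ℕ × ℕ}
    (h0 : f 0 = (0, 0)) (hN : f N = (m' - 1, m'' - 1))
    (hlt : ∀ i ≤ N, (f i).1 < m' ∧ (f i).2 < m'')
    (hstep : ∀ i < N, IsTraversalStep (f i) (f (i + 1))) :
    IsTraversal m' m'' ((List.range (N + 1)).map f) := by
  refine ⟨by simp, ?_, ?_, ?_, ?_⟩
  · simp [List.range_succ_eq_map, h0]
  · simp [List.range_succ, hN]
  · simp only [List.mem_map, List.mem_range]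
    rintro _ ⟨i, hi, rfl⟩
    exact hlt i (by omega)
  · exact List.isChain_map _ |>.mpr <| (List.isChain_range_succ _ N).mpr hstep

section kDTW

variable {E : Type*} [PseudoMetricSpace E] {k m m' m'' : ℕ} {σ τ : ℕ → E}

lemma matchedDists_nonneg (T : List (ℕ × ℕ)) : ∀ x ∈ matchedDists σ τ T, 0 ≤ x := by
  simp only [matchedDists, List.mem_map]
  rintro _ ⟨p, -, rfl⟩
  exact dist_nonneg

lemma kDTW_le_sum {T : List (ℕ × ℕ)} (hT : IsTraversal m' m'' T) :
    kDTW k σ τ m' m'' ≤ (matchedDists σ τ T).sum := by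
  refine le_trans (csInf_le ⟨0, ?_⟩ ⟨T, hT, rfl⟩) (topkSum_le_sum (matchedDists_nonneg T))
  rintro _ ⟨T', -, rfl⟩
  exact topkSum_nonneg (matchedDists_nonneg T')

lemma kDTW_const_const {p q : E} (hm : 1 ≤ m) (hk : k ≤ m) :
    kDTW k (fun _ ↦ p) (fun _ ↦ q) m m = k * dist p q := by
  have hdiag : IsTraversal m m ((List.range (m - 1 + 1)).map fun i ↦ (i, i)) :=
    isTraversal_map_range rfl rfl (fun i _ ↦ by omega) (fun _ _ ↦ Or.inr (Or.inr rfl))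
  have hval : ∀ T, IsTraversal m m T →
      topkSum k (matchedDists (fun _ ↦ p) (fun _ ↦ q) T) = k * dist p q := fun T hT ↦
    topkSum_of_forall_eq (by simp [matchedDists])
      (by simpa [matchedDists] using hk.trans (hT.le_length hm))
  have hset : {x | ∃ T, IsTraversal m m T ∧
      x = topkSum k (matchedDists (fun _ ↦ p) (fun _ ↦ q) T)} = {(k : ℝ) * dist p q} := by
    ext x
    constructor
    · rintro ⟨T, hT, rfl⟩
      exact hval T hT
    · rintro rfl
      exact ⟨_, hdiag, (hval _ hdiag).symm⟩
  rw [kDTW, hset, csInf_singleton]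

lemma kDTW_const_left_le_dist (υ : ℕ → E) (hm : 1 ≤ m) :
    kDTW k (fun _ ↦ υ 0) υ m 2 ≤ dist (υ 0) (υ 1) := by
  have hT : IsTraversal m 2
      ((List.range (m + 1)).map fun i ↦ if i < m then (i, 0) else (m - 1, 1)) := by
    refine isTraversal_map_range (by simp; omega) (by simp) (fun i _ ↦ by split <;> simp <;> omega)
      (fun i hi ↦ ?_)
    by_cases h : i + 1 < m
    · simp [hi, h, IsTraversalStep]
    · simp [hi, h, IsTraversalStep]; omega
  refine (kDTW_le_sum hT).trans_eq ?_
  simp only [matchedDists, List.map_map, List.sum_range_succ]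
  rw [List.sum_eq_zero (by simp +contextual)]
  simp

lemma kDTW_const_right_le_dist (υ : ℕ → E) (hm : 1 ≤ m) :
    kDTW k υ (fun _ ↦ υ 1) 2 m ≤ dist (υ 0) (υ 1) := by
  have hT : IsTraversal 2 m
      ((List.range (m + 1)).map fun j ↦ if j = 0 then (0, 0) else (1, j - 1)) := by
    refine isTraversal_map_range (by simp) (by simp; omega) (fun j _ ↦ by split <;> simp <;> omega)
      (fun j hj ↦ ?_)
    rcases j with _ | j <;> simp [IsTraversalStep]
  refine (kDTW_le_sum hT).trans_eq ?_
  simp [matchedDists, List.sum_range_succ']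

end kDTW

/-- there is no constant `c > 0`, independent of `k` and of the complexities,
such that `d_kDTW(σ,τ) ≤ c (d_kDTW(σ,υ) + d_kDTW(υ,τ))` for all triples of curves in `ℝ^d`. -/
theorem kDTW_no_constant_triangle (d : ℕ) (hd : 1 ≤ d) :
    ¬ ∃ c : ℝ, 0 < c ∧
      ∀ (k m₁ m₂ m₃ : ℕ), 1 ≤ k → 1 ≤ m₁ → 1 ≤ m₂ → 1 ≤ m₃ →
        ∀ σ τ υ : ℕ → EuclideanSpace ℝ (Fin d),
          kDTW k σ τ m₁ m₃ ≤ c * (kDTW k σ υ m₁ m₂ + kDTW k υ τ m₂ m₃) := by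
  rintro ⟨c, hc, H⟩
  obtain ⟨n, hn⟩ := exists_nat_gt (2 * c)
  have hn1 : 1 ≤ n := Nat.cast_pos.mp (by linarith : (0 : ℝ) < n)
  let υ : ℕ → EuclideanSpace ℝ (Fin d) := fun j ↦ if j = 0 then 0 else .single ⟨0, hd⟩ 1
  have hυ : dist (υ 0) (υ 1) = 1 := by simp [υ]
  have htri := H n n 2 n hn1 hn1 one_le_two hn1 (fun _ ↦ υ 0) (fun _ ↦ υ 1) υ
  rw [kDTW_const_const hn1 le_rfl, hυ] at htri
  have hleft := kDTW_const_left_le_dist (k := n) υ hn1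
  have hright := kDTW_const_right_le_dist (k := n) υ hn1
  rw [hυ] at hleft hright
  nlinarith
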